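/- Let 0 < p < 1/2 and let α : ℕ → ℕ be a strictly increasing sequence of positive integers satisfying λ·∑_{η=0}^{k-1} M_{α_η}^{1/p}/α_η < M_{α_k}^{1/p}/α_k for every k ≥ 1. Then for every k ≥ 1, every j with 1 ≤ j ≤ M_{α_k}, and every x ∈ G_m, |∑_{v=0}^{j-1} ĉ(v)·ψ_v(x)| ≤ 4·λ·M_{α_{k-1}}^{1/p}/α_{k-1}. -/

import Mathlib

open MeasureTheory Complex Finset ENNReal

noncomputable section

namespace VilenkinT

variable (m : ℕ → ℕ)

/-- The generalized powers `M_0 = 1`, `M_{k+1} = m_k M_k`. -/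
def Mgen : ℕ → ℕ
  | 0 => 1
  | k + 1 => m k * Mgen k

/-- The Vilenkin group (as a measurable space of coordinate sequences). -/
abbrev G := ∀ k : ℕ, Fin (m k)

/-- The `j`-th digit of `n` in the generalized number system based on `m`. -/
def digit (n j : ℕ) : ℕ := n / Mgen m j % m j

/-- The Vilenkin system `ψ_n(x) = ∏_k exp(2πi n_k x_k / m_k)`. -/
def psi (n : ℕ) (x : G m) : ℂ :=
  ∏' k : ℕ, Complex.exp (2 * Real.pi * Complex.I * (digit m n k : ℂ) * ((x k : ℕ) : ℂ) / (m k : ℂ))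

/-- Partial sums of the Vilenkin–Fourier series built from coefficients `fhat`. -/
def partialSum (fhat : ℕ → ℂ) (n : ℕ) (x : G m) : ℂ :=
  ∑ k ∈ Finset.range n, fhat k * psi m k x

/-- `Q_n := ∑_{k=0}^{n-1} q_k`. -/
def Qsum (q : ℕ → ℝ) (n : ℕ) : ℝ := ∑ k ∈ Finset.range n, q k

/-- The `T`-means `T_n f = (1/Q_n) ∑_{k=0}^{n-1} q_k S_k f`. -/
def Tmean (q : ℕ → ℝ) (fhat : ℕ → ℂ) (n : ℕ) (x : G m) : ℂ :=
  (1 / (Qsum q n : ℂ)) * ∑ k ∈ Finset.range n, (q k : ℂ) * partialSum m fhat k x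

/-- The maximal operator `T^* f = sup_{n ≥ 1} |T_n f|` (with values in `ℝ≥0∞`). -/
def Tstar (q : ℕ → ℝ) (fhat : ℕ → ℂ) (x : G m) : ℝ≥0∞ :=
  ⨆ (n : ℕ) (_ : 1 ≤ n), ENNReal.ofReal (norm (Tmean m q fhat n x))

/-- The weak-`L_p` norm `sup_{t>0} t μ(g > t)^{1/p}` of an `ℝ≥0∞`-valued function. -/
def weakNorm (μ : Measure (G m)) (p : ℝ) (g : G m → ℝ≥0∞) : ℝ≥0∞ :=
  ⨆ (t : ℝ) (_ : 0 < t), ENNReal.ofReal t * (μ {x | ENNReal.ofReal t < g x}) ^ (1 / p)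

/-- The weak-`L_p` norm of a complex valued function. -/
def weakNormC (μ : Measure (G m)) (p : ℝ) (g : G m → ℂ) : ℝ≥0∞ :=
  weakNorm m μ p fun x => ENNReal.ofReal (norm (g x))

/-- `μ` is the product of the uniform probability measures on the coordinates:
it is a probability measure giving each cylinder of length `n` measure `1/M_n`. -/
def IsHaar (μ : Measure (G m)) : Prop :=
  IsProbabilityMeasure μ ∧
    ∀ (n : ℕ) (x : G m), μ {y | ∀ i < n, y i = x i} = ((Mgen m n : ℝ≥0∞))⁻¹

/-- The σ-algebra generated by the first `n` coordinates. -/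
def coordMS (n : ℕ) : MeasurableSpace (G m) :=
  MeasurableSpace.comap (fun x (i : Fin n) => x i) inferInstance

/-- `f = (f^{(n)})` is a martingale with respect to the filtration of coordinate σ-algebras. -/
def IsVMartingale (μ : Measure (G m)) (f : ℕ → G m → ℂ) : Prop :=
  (∀ n, Integrable (f n) μ) ∧ (∀ n, StronglyMeasurable[coordMS m n] (f n)) ∧
    ∀ n, μ[f (n + 1)|coordMS m n] =ᵐ[μ] f n

/-- `fhat` is the coefficient function of the martingale `f`. -/
def IsCoeff (μ : Measure (G m)) (f : ℕ → G m → ℂ) (fhat : ℕ → ℂ) : Prop :=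
  ∀ k i, i < Mgen m k → fhat i = ∫ x, f k x * (starRingEnd ℂ) (psi m i x) ∂μ

/-- The martingale Hardy space (quasi-)norm `‖f‖_{H_p} = (∫ (sup_n |f^{(n)}|)^p dμ)^{1/p}`. -/
def HardyNorm (μ : Measure (G m)) (p : ℝ) (f : ℕ → G m → ℂ) : ℝ≥0∞ :=
  (∫⁻ x, (⨆ n, ENNReal.ofReal (norm (f n x))) ^ p ∂μ) ^ (1 / p)

/-- The Vilenkin–Fourier coefficients of an integrable function. -/
def fourierCoeff (μ : Measure (G m)) (f : G m → ℂ) (n : ℕ) : ℂ :=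
  ∫ x, f x * (starRingEnd ℂ) (psi m n x) ∂μ

/-- The Fejér means `σ_n f = (1/n) ∑_{k=1}^n S_k f`. -/
def sigmaMean (fhat : ℕ → ℂ) (n : ℕ) (x : G m) : ℂ :=
  (1 / (n : ℂ)) * ∑ k ∈ Finset.Icc 1 n, partialSum m fhat k x

/-- The maximal Fejér operator `σ^* f = sup_{n ≥ 1} |σ_n f|`. -/
def sigmaStar (fhat : ℕ → ℂ) (x : G m) : ℝ≥0∞ :=
  ⨆ (n : ℕ) (_ : 1 ≤ n), ENNReal.ofReal (norm (sigmaMean m fhat n x))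

/-- `l_n := ∑_{k=1}^{n-1} 1/k`. -/
def lsum (n : ℕ) : ℝ := ∑ k ∈ Finset.Icc 1 (n - 1), (1 : ℝ) / k

/-- The Riesz logarithmic means `R_n f = (1/l_n) ∑_{k=1}^{n-1} S_k f / k`. -/
def Riesz (fhat : ℕ → ℂ) (n : ℕ) (x : G m) : ℂ :=
  (1 / (lsum n : ℂ)) * ∑ k ∈ Finset.Icc 1 (n - 1), partialSum m fhat k x / (k : ℂ)

/-- The maximal Riesz operator `R^* f = sup_{n ≥ 2} |R_n f|`. -/
def RieszStar (fhat : ℕ → ℂ) (x : G m) : ℝ≥0∞ :=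
  ⨆ (n : ℕ) (_ : 2 ≤ n), ENNReal.ofReal (norm (Riesz m fhat n x))

/-- The Cesàro numbers `A_n^α = ∏_{j=1}^n (α+j)/j`. -/
def Aces (α : ℝ) (n : ℕ) : ℝ := ∏ j ∈ Finset.Icc 1 n, (α + j) / j

/-- The means `U_n^α f = (1/A_n^α) ∑_{k=0}^{n-1} A_k^{α-1} S_k f`. -/
def Umean (α : ℝ) (fhat : ℕ → ℂ) (n : ℕ) (x : G m) : ℂ :=
  (1 / (Aces α n : ℂ)) * ∑ k ∈ Finset.range n, (Aces (α - 1) k : ℂ) * partialSum m fhat k x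

/-- The maximal operator `U^{α,*} f = sup_{n ≥ 1} |U_n^α f|`. -/
def Ustar (α : ℝ) (fhat : ℕ → ℂ) (x : G m) : ℝ≥0∞ :=
  ⨆ (n : ℕ) (_ : 1 ≤ n), ENNReal.ofReal (norm (Umean m α fhat n x))

/-- The weights `q_0 = 1`, `q_k = k^{α-1}` generating the means `V_n^α`. -/
def qV (α : ℝ) (k : ℕ) : ℝ := if k = 0 then 1 else (k : ℝ) ^ (α - 1)

/-- The weights `q_k = max(0, log^{(β)}(k^α))` generating the means `B_n^{α,β}`. -/
def qB (α : ℝ) (β : ℕ) (k : ℕ) : ℝ := max 0 (Real.log^[β] ((k : ℝ) ^ α))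

/-- The maximal operator `B^{α,β,*} f = sup_{n : Q_n > 0} |B_n^{α,β} f|`. -/
def Bstar (α : ℝ) (β : ℕ) (fhat : ℕ → ℂ) (x : G m) : ℝ≥0∞ :=
  ⨆ (n : ℕ) (_ : 0 < Qsum (qB α β) n), ENNReal.ofReal (norm (Tmean m (qB α β) fhat n x))

open Classical in
/-- The coefficient function `ĉ` of the counterexample martingale:
`ĉ(v) = M_{α_k}^{1/p-1}/α_k` for `M_{α_k} ≤ v < M_{α_k + 1}`, and `0` otherwise. -/
def chat (p : ℝ) (a : ℕ → ℕ) (v : ℕ) : ℝ :=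
  if h : ∃ k, Mgen m (a k) ≤ v ∧ v < Mgen m (a k + 1) then
    (Mgen m (a h.choose) : ℝ) ^ (1 / p - 1) / (a h.choose : ℝ)
  else 0

/-! On `[0, M_{a_k})` the coefficients `ĉ` are nonnegative, constant on the blocks
`[M_{a_η}, M_{a_η + 1})`, `η < k`, and zero elsewhere. As `|ψ_v| = 1`, the partial sum is therefore
at most `∑_{η<k} (M_{a_η+1} - M_{a_η}) ĉ(M_{a_η}) ≤ λ ∑_{η<k} M_{a_η}^{1/p}/a_η`, and the
separation hypothesis bounds this lacunary sum by twice its last term. -/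

variable {m}

lemma Mgen_succ (n : ℕ) : Mgen m (n + 1) = m n * Mgen m n := rfl

section Growth

variable (hm : ∀ k, 2 ≤ m k)
include hm

lemma Mgen_pos (n : ℕ) : 0 < Mgen m n := by
  induction n with
  | zero => exact Nat.one_pos
  | succ n ih => rw [Mgen_succ]; exact Nat.mul_pos (by linarith [hm n]) ih

lemma Mgen_mono : Monotone (Mgen m) :=
  monotone_nat_of_le_succ fun n => by
    rw [Mgen_succ]; exact Nat.le_mul_of_pos_left _ (by linarith [hm n])

lemma lt_Mgen_self (n : ℕ) : n < Mgen m n := by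
  induction n with
  | zero => exact Nat.one_pos
  | succ n ih => rw [Mgen_succ]; nlinarith [hm n]

lemma norm_psi (n : ℕ) (x : G m) : ‖psi m n x‖ = 1 := by
  have hfactor : ∀ k, ‖Complex.exp (2 * Real.pi * Complex.I * (digit m n k : ℂ) *
      ((x k : ℕ) : ℂ) / (m k : ℂ))‖ = 1 := fun k => by
    rw [Complex.norm_exp]
    simp
  -- all digits of `n` beyond position `n` vanish, so the product is finite
  have hdigit : ∀ k ∉ Finset.range (n + 1), digit m n k = 0 := fun k hk => by
    have hnk : n < Mgen m k :=
      (lt_Mgen_self hm n).trans_le (Mgen_mono hm (by simp at hk; omega))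
    simp [digit, Nat.div_eq_of_lt hnk]
  rw [psi, tprod_eq_prod (s := Finset.range (n + 1)) fun k hk => by simp [hdigit k hk], norm_prod]
  exact Finset.prod_eq_one fun k _ => hfactor k

lemma norm_partialSum_le (fhat : ℕ → ℂ) (j : ℕ) (x : G m) :
    ‖partialSum m fhat j x‖ ≤ ∑ v ∈ Finset.range j, ‖fhat v‖ :=
  (norm_sum_le _ _).trans_eq <| Finset.sum_congr rfl fun v _ => by
    rw [norm_mul, norm_psi hm, mul_one]

end Growth

section Coefficients

variable {p : ℝ} {a : ℕ → ℕ}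

lemma chat_nonneg (v : ℕ) : 0 ≤ chat m p a v := by
  unfold chat
  split_ifs <;> positivity

lemma chat_eq_zero {v : ℕ} (hv : ∀ k, v < Mgen m (a k) ∨ Mgen m (a k + 1) ≤ v) :
    chat m p a v = 0 := by
  rw [chat, dif_neg]
  rintro ⟨k, hk₁, hk₂⟩
  rcases hv k with h | h <;> omega

variable (hm : ∀ k, 2 ≤ m k) (ha : StrictMono a)
include hm ha

lemma Mgen_succ_le_of_lt {k l : ℕ} (hkl : k < l) : Mgen m (a k + 1) ≤ Mgen m (a l) :=
  Mgen_mono hm (ha hkl)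

lemma chat_eq {k v : ℕ} (hv₁ : Mgen m (a k) ≤ v) (hv₂ : v < Mgen m (a k + 1)) :
    chat m p a v = (Mgen m (a k) : ℝ) ^ (1 / p - 1) / (a k : ℝ) := by
  have hex : ∃ l, Mgen m (a l) ≤ v ∧ v < Mgen m (a l + 1) := ⟨k, hv₁, hv₂⟩
  obtain ⟨hl₁, hl₂⟩ := hex.choose_spec
  have hchoose : hex.choose = k := by
    rcases lt_trichotomy hex.choose k with h | h | h
    · have := Mgen_succ_le_of_lt hm ha h; omega
    · exact h
    · have := Mgen_succ_le_of_lt hm ha h; omega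
  rw [chat, dif_pos hex, hchoose]

lemma sum_chat_block (k : ℕ) :
    ∑ v ∈ Finset.Ico (Mgen m (a k)) (Mgen m (a k + 1)), chat m p a v =
      ((Mgen m (a k + 1) - Mgen m (a k) : ℕ) : ℝ) *
        ((Mgen m (a k) : ℝ) ^ (1 / p - 1) / (a k : ℝ)) := by
  rw [Finset.sum_congr rfl fun v hv => chat_eq hm ha (Finset.mem_Ico.1 hv).1
    (Finset.mem_Ico.1 hv).2, Finset.sum_const, Nat.card_Ico, nsmul_eq_mul]

lemma sum_chat_gap (k : ℕ) :
    ∑ v ∈ Finset.Ico (Mgen m (a k + 1)) (Mgen m (a (k + 1))), chat m p a v = 0 :=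
  Finset.sum_eq_zero fun v hv => chat_eq_zero fun l => by
    rw [Finset.mem_Ico] at hv
    rcases le_or_gt l k with hlk | hlk
    · exact Or.inr ((Mgen_mono hm (Nat.succ_le_succ (ha.monotone hlk))).trans hv.1)
    · exact Or.inl (hv.2.trans_le (Mgen_mono hm (ha.monotone hlk)))

lemma sum_range_chat_Mgen (k : ℕ) :
    ∑ v ∈ Finset.range (Mgen m (a k)), chat m p a v =
      ∑ η ∈ Finset.range k, ((Mgen m (a η + 1) - Mgen m (a η) : ℕ) : ℝ) *
        ((Mgen m (a η) : ℝ) ^ (1 / p - 1) / (a η : ℝ)) := by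
  induction k with
  | zero =>
    refine Finset.sum_eq_zero fun v hv => chat_eq_zero fun l => Or.inl ?_
    exact (Finset.mem_range.1 hv).trans_le (Mgen_mono hm (ha.monotone (Nat.zero_le l)))
  | succ k ih =>
    have hblock : Mgen m (a k) ≤ Mgen m (a k + 1) := Mgen_mono hm (Nat.le_succ _)
    have hgap : Mgen m (a k + 1) ≤ Mgen m (a (k + 1)) := Mgen_succ_le_of_lt hm ha (Nat.lt_add_one k)
    rw [← Finset.sum_range_add_sum_Ico _ (hblock.trans hgap),
      ← Finset.sum_Ico_consecutive _ hblock hgap, sum_chat_gap hm ha, sum_chat_block hm ha, ih,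
      Finset.sum_range_succ, add_zero]

end Coefficients

lemma Mgen_succ_sub_le {Λ : ℕ} (hΛ : ∀ k, m k ≤ Λ) (n : ℕ) :
    Mgen m (n + 1) - Mgen m n ≤ Λ * Mgen m n := by
  rw [Mgen_succ]
  exact (Nat.sub_le _ _).trans (Nat.mul_le_mul_right _ (hΛ n))

lemma Mgen_succ_sub_mul_rpow_le (hm : ∀ k, 2 ≤ m k) {Λ : ℕ} (hΛ : ∀ k, m k ≤ Λ) (n : ℕ)
    (s : ℝ) {c : ℝ} (hc : 0 ≤ c) :
    ((Mgen m (n + 1) - Mgen m n : ℕ) : ℝ) * ((Mgen m n : ℝ) ^ (s - 1) / c) ≤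
      Λ * ((Mgen m n : ℝ) ^ s / c) := by
  have hM : (0 : ℝ) < Mgen m n := by exact_mod_cast Mgen_pos hm n
  calc _ ≤ ((Λ * Mgen m n : ℕ) : ℝ) * ((Mgen m n : ℝ) ^ (s - 1) / c) := by
        gcongr
        exact Mgen_succ_sub_le hΛ n
    _ = Λ * ((Mgen m n : ℝ) ^ s / c) := by
        rw [Real.rpow_sub_one hM.ne']
        push_cast
        field_simp

lemma sum_range_mul_le_two_mul {Λ : ℝ} (hΛ : 1 ≤ Λ) {t : ℕ → ℝ} (ht : ∀ k, 0 ≤ t k)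
    (hsep : ∀ k, 1 ≤ k → Λ * ∑ η ∈ Finset.range k, t η < t k) (k : ℕ) :
    Λ * ∑ η ∈ Finset.range (k + 1), t η ≤ 2 * Λ * t k := by
  have hprev : Λ * ∑ η ∈ Finset.range k, t η ≤ t k := by
    rcases Nat.eq_zero_or_pos k with rfl | hk
    · simpa using ht 0
    · exact (hsep k hk).le
  rw [Finset.sum_range_succ, mul_add]
  nlinarith [ht k]

theorem partialSum_chat_bound_general
    (m : ℕ → ℕ) (hm : ∀ k, 2 ≤ m k) (Λ : ℕ) (hΛ : IsLUB (Set.range m) Λ)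
    (p : ℝ)
    (a : ℕ → ℕ) (ha : StrictMono a)
    (hsep : ∀ k : ℕ, 1 ≤ k →
      (Λ : ℝ) * ∑ η ∈ Finset.range k, (Mgen m (a η) : ℝ) ^ (1 / p) / (a η : ℝ) <
        (Mgen m (a k) : ℝ) ^ (1 / p) / (a k : ℝ)) :
    ∀ k : ℕ, 1 ≤ k → ∀ j : ℕ, 1 ≤ j → j ≤ Mgen m (a k) → ∀ x : G m,
      norm (partialSum m (fun v => (chat m p a v : ℂ)) j x) ≤
        4 * (Λ : ℝ) * (Mgen m (a (k - 1)) : ℝ) ^ (1 / p) / (a (k - 1) : ℝ) := by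
  intro k hk j _ hj x
  obtain ⟨k, rfl⟩ : ∃ k', k = k' + 1 := ⟨k - 1, by omega⟩
  have hmΛ : ∀ i, m i ≤ Λ := fun i => hΛ.1 (Set.mem_range_self i)
  have hΛ1 : (1 : ℝ) ≤ Λ := by exact_mod_cast (by linarith [hm 0, hmΛ 0] : 1 ≤ Λ)
  calc ‖partialSum m (fun v => (chat m p a v : ℂ)) j x‖
      ≤ ∑ v ∈ Finset.range j, chat m p a v := by
        simpa [abs_of_nonneg (chat_nonneg _)] using
          norm_partialSum_le hm (fun v => (chat m p a v : ℂ)) j x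
    _ ≤ ∑ v ∈ Finset.range (Mgen m (a (k + 1))), chat m p a v :=
        Finset.sum_le_sum_of_subset_of_nonneg (Finset.range_subset_range.2 hj)
          fun v _ _ => chat_nonneg v
    _ ≤ Λ * ∑ η ∈ Finset.range (k + 1), (Mgen m (a η) : ℝ) ^ (1 / p) / (a η : ℝ) := by
        rw [sum_range_chat_Mgen hm ha, Finset.mul_sum]
        exact Finset.sum_le_sum fun η _ =>
          Mgen_succ_sub_mul_rpow_le hm hmΛ (a η) (1 / p) (Nat.cast_nonneg _)
    _ ≤ 2 * Λ * ((Mgen m (a k) : ℝ) ^ (1 / p) / (a k : ℝ)) :=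
        sum_range_mul_le_two_mul hΛ1 (fun η => by positivity) hsep k
    _ ≤ 4 * Λ * (Mgen m (a (k + 1 - 1)) : ℝ) ^ (1 / p) / (a (k + 1 - 1) : ℝ) := by
        rw [Nat.add_sub_cancel, mul_div_assoc]
        gcongr
        norm_num

/-- Partial-sum estimate for the counterexample coefficients: if `a` is a
strictly increasing sequence of positive integers satisfying
`λ ∑_{η<k} M_{a_η}^{1/p}/a_η < M_{a_k}^{1/p}/a_k`, then for `k ≥ 1`, `1 ≤ j ≤ M_{a_k}` and
every `x`, `|∑_{v<j} ĉ(v) ψ_v(x)| ≤ 4 λ M_{a_{k-1}}^{1/p}/a_{k-1}`. -/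
theorem partialSum_chat_bound
    (m : ℕ → ℕ) (hm : ∀ k, 2 ≤ m k) (Λ : ℕ) (hΛ : IsLUB (Set.range m) Λ)
    (p : ℝ) (hp : 0 < p) (hp2 : p < 1 / 2)
    (a : ℕ → ℕ) (ha : StrictMono a) (ha1 : ∀ k, 1 ≤ a k)
    (hsep : ∀ k : ℕ, 1 ≤ k →
      (Λ : ℝ) * ∑ η ∈ Finset.range k, (Mgen m (a η) : ℝ) ^ (1 / p) / (a η : ℝ) <
        (Mgen m (a k) : ℝ) ^ (1 / p) / (a k : ℝ)) :
    ∀ k : ℕ, 1 ≤ k → ∀ j : ℕ, 1 ≤ j → j ≤ Mgen m (a k) → ∀ x : G m,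
      norm (partialSum m (fun v => (chat m p a v : ℂ)) j x) ≤
        4 * (Λ : ℝ) * (Mgen m (a (k - 1)) : ℝ) ^ (1 / p) / (a (k - 1) : ℝ) :=
  partialSum_chat_bound_general m hm Λ hΛ p a ha hsep

end VilenkinT
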